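/- Let m ≥ 1, let J be the 2m×2m block matrix [[0, -I_m],[I_m, 0]], and let the group Σ of order two act on U(2m) by σ_H(u) = J·ū·J⁻¹ (ū the entrywise complex conjugate); the fixed subgroup U(2m)^{Σ} is the compact symplectic group Sp(m) = {u ∈ U(2m) : u·J·uᵀ = J}. Let Γ be a group equipped with an action of Σ. Then the assignment ρ ↦ ρ̂ induces a bijection from the set of Σ-equivariant group homomorphisms ρ : Γ → U(2m) modulo conjugation by elements of Sp(m), onto the set of homomorphisms of Σ-augmentations χ : Γ⋊Σ → U(2m)⋊Σ modulo conjugation by elements (u,1) with u ∈ U(2m). -/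

import Mathlib

/-- The standard symplectic matrix `J = [[0, -I_m],[I_m, 0]]`. -/
noncomputable def Jmat (m : ℕ) : Matrix (Fin m ⊕ Fin m) (Fin m ⊕ Fin m) ℂ :=
  Matrix.fromBlocks 0 (-1) 1 0

/-- The set of Σ-equivariant group homomorphisms `ρ : Γ → G`. -/
def EquivHom {S Γ G : Type*} [Group S] [Group Γ] [Group G]
    (φΓ : S →* MulAut Γ) (φG : S →* MulAut G) :=
  {ρ : Γ →* G // ∀ (s : S) (γ : Γ), ρ (φΓ s γ) = φG s (ρ γ)}

/-- The set of homomorphisms of Σ-augmentations `χ : Γ⋊Σ → G⋊Σ`. -/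
def AugHom {S Γ G : Type*} [Group S] [Group Γ] [Group G]
    (φΓ : S →* MulAut Γ) (φG : S →* MulAut G) :=
  {χ : Γ ⋊[φΓ] S →* G ⋊[φG] S // ∀ x : Γ ⋊[φΓ] S, (χ x).right = x.right}

/-- The assignment `ρ ↦ ρ̂`, `(γ, σ) ↦ (ρ(γ), σ)`. -/
def hatFun {S Γ G : Type*} [Group S] [Group Γ] [Group G]
    (φΓ : S →* MulAut Γ) (φG : S →* MulAut G) (ρ : EquivHom φΓ φG) : AugHom φΓ φG :=
  ⟨{ toFun := fun x => ⟨ρ.1 x.left, x.right⟩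
     map_one' := by ext <;> simp
     map_mul' := fun x y => by ext <;> simp [ρ.2] },
   fun x => rfl⟩

/-! An augmentation homomorphism `χ` restricts on `Σ` to `s ↦ (c s, s)` with `c` a crossed
homomorphism `Σ → U(2m)`. It is conjugate by some `(u, 1)` to a `ρ̂` exactly when `c` is principal,
and `ρ̂₁, ρ̂₂` are conjugate by `(u, 1)` exactly when `u` is `Σ`-fixed, i.e. `u ∈ Sp(m)`. So the
theorem reduces to the vanishing of `H¹(Σ, U(2m))`. A cocycle is a unitary `u` with
`u J ū J⁻¹ = 1`; then `A = u J` is unitary and skew-symmetric, so `θ x = A x̄` is antiunitary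
with `θ² = -1`. A Gram–Schmidt process adapted to `θ` produces an orthonormal basis
`e₁, …, e_m, θe₁, …, θe_m`, i.e. a unitary `v` with `A = v J vᵀ`, and then `u = w⁻¹ σ_H(w)` for
`w = v⋆`. -/

open SemidirectProduct

lemma SemidirectProduct.inl_mul_mul_inl_inv {N G : Type*} [Group N] [Group G]
    {φ : G →* MulAut N} (u : N) (y : N ⋊[φ] G) :
    inl u * y * (inl u)⁻¹ = ⟨u * y.left * φ y.right u⁻¹, y.right⟩ := by
  ext <;> simp [← map_inv, mul_assoc]

section Augmentation

variable {S Γ G : Type*} [Group S] [Group Γ] [Group G] {φΓ : S →* MulAut Γ}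
  {φG : S →* MulAut G}

def IsCrossedHom (φ : S →* MulAut G) (c : S → G) : Prop :=
  ∀ s t, c (s * t) = c s * φ s (c t)

def H1Trivial (φ : S →* MulAut G) : Prop :=
  ∀ c, IsCrossedHom φ c → ∃ w : G, ∀ s, c s = w⁻¹ * φ s w

def EquivHom.FixedConj (ρ₁ ρ₂ : EquivHom φΓ φG) : Prop :=
  ∃ g : G, (∀ s, φG s g = g) ∧ ∀ γ, ρ₂.1 γ = g * ρ₁.1 γ * g⁻¹

def AugHom.InlConj (χ₁ χ₂ : AugHom φΓ φG) : Prop :=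
  ∃ u : G, ∀ x, χ₂.1 x = inl u * χ₁.1 x * (inl u)⁻¹

lemma hatFun_apply (ρ : EquivHom φΓ φG) (x : Γ ⋊[φΓ] S) :
    (hatFun φΓ φG ρ).1 x = ⟨ρ.1 x.left, x.right⟩ := rfl

lemma AugHom.inlConj_equivalence : Equivalence (AugHom.InlConj (φΓ := φΓ) (φG := φG)) where
  refl _ := ⟨1, fun x => by simp⟩
  symm := by
    rintro χ₁ χ₂ ⟨u, hu⟩
    exact ⟨u⁻¹, fun x => by rw [hu x, map_inv]; group⟩
  trans := by
    rintro χ₁ χ₂ χ₃ ⟨u, hu⟩ ⟨w, hw⟩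
    exact ⟨w * u, fun x => by rw [hw x, hu x, map_mul]; group⟩

lemma AugHom.inlConj_hatFun_iff (ρ₁ ρ₂ : EquivHom φΓ φG) :
    AugHom.InlConj (hatFun φΓ φG ρ₁) (hatFun φΓ φG ρ₂) ↔ EquivHom.FixedConj ρ₁ ρ₂ := by
  simp only [AugHom.InlConj, EquivHom.FixedConj, inl_mul_mul_inl_inv, hatFun_apply]
  refine exists_congr fun g => ⟨fun h => ⟨fun s => ?_, fun γ => ?_⟩, fun ⟨hfix, hρ⟩ x => ?_⟩
  · have := congrArg left (h (inr s))
    simp only [left_inr, right_inr, map_one, mul_one, map_inv] at this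
    exact (mul_inv_eq_one.mp this.symm).symm
  · simpa using congrArg left (h (inl γ))
  · rw [map_inv, hfix, ← hρ]

def AugHom.conj (u : G) (χ : AugHom φΓ φG) : AugHom φΓ φG :=
  ⟨(MulAut.conj (inl u)).toMonoidHom.comp χ.1, fun x => by
    simp [inl_mul_mul_inl_inv, χ.2 x]⟩

lemma AugHom.conj_apply (u : G) (χ : AugHom φΓ φG) (x : Γ ⋊[φΓ] S) :
    (χ.conj u).1 x = inl u * χ.1 x * (inl u)⁻¹ := rfl

lemma AugHom.isCrossedHom_left_inr (χ : AugHom φΓ φG) :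
    IsCrossedHom φG fun s => (χ.1 (inr s)).left := by
  obtain ⟨χ, hχ⟩ := χ
  intro s t
  simp only [map_mul, mul_left, hχ, right_inr]

lemma AugHom.exists_hatFun_eq (χ : AugHom φΓ φG) (hχ : ∀ s, χ.1 (inr s) = inr s) :
    ∃ ρ, hatFun φΓ φG ρ = χ := by
  obtain ⟨χ, hright⟩ := χ
  change ∀ s, χ (inr s) = inr s at hχ
  have hinl : ∀ γ, χ (inl γ) = inl (χ (inl γ)).left := fun γ => by
    ext
    · rfl
    · rw [hright]; rfl
  let ρ : Γ →* G := MonoidHom.mk' (fun γ => (χ (inl γ)).left) fun a b => by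
    rw [map_mul, map_mul, hinl a, hinl b]; simp
  refine ⟨⟨ρ, fun s γ => ?_⟩, Subtype.ext (MonoidHom.ext fun x => ?_)⟩
  · have h : χ (inl (φΓ s γ)) = inl (φG s (χ (inl γ)).left) := by
      conv_lhs => rw [inl_aut, map_mul, map_mul, hχ, hχ, hinl γ]
      rw [← inl_aut]
    exact congrArg left h
  · show (⟨ρ x.left, x.right⟩ : G ⋊[φG] S) = χ x
    conv_rhs => rw [← inl_left_mul_inr_right x, map_mul, hinl, hχ]
    ext <;> simp [ρ]

lemma AugHom.exists_inlConj_hatFun (hH1 : H1Trivial φG) (χ : AugHom φΓ φG) :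
    ∃ ρ, AugHom.InlConj (hatFun φΓ φG ρ) χ := by
  obtain ⟨w, hw⟩ := hH1 _ χ.isCrossedHom_left_inr
  obtain ⟨ρ, hρ⟩ := (χ.conj w).exists_hatFun_eq fun s => by
    rw [AugHom.conj_apply, inl_mul_mul_inl_inv, hw, χ.2, right_inr, map_inv]
    ext <;> simp
  refine ⟨ρ, AugHom.inlConj_equivalence.symm ⟨w, fun x => ?_⟩⟩
  rw [hρ, AugHom.conj_apply]

theorem exists_quotEquiv_hatFun (hH1 : H1Trivial φG) :
    ∃ e : Quot (EquivHom.FixedConj (φΓ := φΓ) (φG := φG)) ≃ Quot AugHom.InlConj,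
      ∀ ρ, e (Quot.mk _ ρ) = Quot.mk _ (hatFun φΓ φG ρ) := by
  let f := Quot.map (hatFun φΓ φG) fun ρ₁ ρ₂ => (AugHom.inlConj_hatFun_iff ρ₁ ρ₂).2
  have hinj : Function.Injective f := by
    rintro ⟨ρ₁⟩ ⟨ρ₂⟩ h
    exact Quot.sound ((AugHom.inlConj_hatFun_iff ρ₁ ρ₂).1
      (AugHom.inlConj_equivalence.eqvGen_iff.1 (Quot.eqvGen_exact h)))
  have hsurj : Function.Surjective f := by
    rintro ⟨χ⟩
    obtain ⟨ρ, hρ⟩ := AugHom.exists_inlConj_hatFun hH1 χ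
    exact ⟨Quot.mk _ ρ, Quot.sound hρ⟩
  exact ⟨Equiv.ofBijective f ⟨hinj, hsurj⟩, fun _ => rfl⟩

end Augmentation

lemma IsCrossedHom.map_one {S G : Type*} [Group S] [Group G] {φ : S →* MulAut G} {c : S → G}
    (hc : IsCrossedHom φ c) : c 1 = 1 := by
  simpa using hc 1 1

lemma h1Trivial_of_card_eq_two {S G : Type*} [Group S] [Group G] {φ : S →* MulAut G}
    (hS : Nat.card S = 2) (hφ : ∀ s ≠ 1, ∀ u : G, u * φ s u = 1 → ∃ w : G, u = w⁻¹ * φ s w) :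
    H1Trivial φ := by
  intro c hc
  obtain ⟨s₀, hs₀, huniq⟩ := (Nat.card_eq_two_iff' (1 : S)).1 hS
  have hsq : s₀ * s₀ = 1 := by simpa [sq, hS] using pow_card_eq_one' (x := s₀)
  obtain ⟨w, hw⟩ := hφ s₀ hs₀ (c s₀) (by rw [← hc, hsq, hc.map_one])
  refine ⟨w, fun s => ?_⟩
  by_cases hs : s = 1
  · simp [hs, hc.map_one]
  · rwa [huniq s hs]

open Matrix

section Unitary

variable {n : Type*} [Fintype n] [DecidableEq n] {g : Matrix n n ℂ}

lemma Matrix.map_conj_mul_transpose_of_mem_unitaryGroup (hg : g ∈ unitaryGroup n ℂ) :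
    g.map (starRingEnd ℂ) * gᵀ = 1 := by
  change gᴴᵀ * gᵀ = 1
  rw [← transpose_mul, ← star_eq_conjTranspose, hg.2, transpose_one]

lemma Matrix.transpose_mul_map_conj_of_mem_unitaryGroup (hg : g ∈ unitaryGroup n ℂ) :
    gᵀ * g.map (starRingEnd ℂ) = 1 := by
  change gᵀ * gᴴᵀ = 1
  rw [← transpose_mul, ← star_eq_conjTranspose, hg.1, transpose_one]

end Unitary

section Jmat

variable {m : ℕ}

lemma Jmat_mul_Jmat : Jmat m * Jmat m = -1 := by
  simp [Jmat, fromBlocks_multiply, ← fromBlocks_one, fromBlocks_neg]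

lemma Jmat_transpose : (Jmat m)ᵀ = -Jmat m := by
  simp [Jmat, fromBlocks_transpose, fromBlocks_neg]

lemma Jmat_map_conj : (Jmat m).map (starRingEnd ℂ) = Jmat m := by
  simp [Jmat, fromBlocks_map, Matrix.map_neg, Matrix.map_one]

lemma Jmat_inv : (Jmat m)⁻¹ = -Jmat m :=
  inv_eq_right_inv (by rw [mul_neg, Jmat_mul_Jmat, neg_neg])

lemma Jmat_mem_unitaryGroup : Jmat m ∈ unitaryGroup (Fin m ⊕ Fin m) ℂ := by
  rw [mem_unitaryGroup_iff, star_eq_conjTranspose, conjTranspose, Jmat_transpose]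
  change Jmat m * (-Jmat m).map (starRingEnd ℂ) = 1
  rw [Matrix.map_neg _ (map_neg _), Jmat_map_conj, mul_neg, Jmat_mul_Jmat, neg_neg]

end Jmat

section Quaternionic

variable {ι : Type*} [Fintype ι] {A : Matrix ι ι ℂ}

lemma exists_unit_orthogonal_of_lt_card {k : ℕ} (hk : k < Fintype.card ι) (g : Fin k → ι → ℂ) :
    ∃ x : ι → ℂ, star x ⬝ᵥ x = 1 ∧ ∀ i, star (g i) ⬝ᵥ x = 0 := by
  let W := Submodule.span ℂ (Set.range fun i => WithLp.toLp 2 (g i))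
  have hW : W < ⊤ := by
    apply span_lt_top_of_card_lt_finrank
    rw [finrank_euclideanSpace, Set.toFinset_card]
    exact (Fintype.card_range_le _).trans_lt (by simpa using hk)
  obtain ⟨y, hy, hy0⟩ := Submodule.exists_mem_ne_zero_of_ne_bot
    fun h => hW.ne (Submodule.orthogonal_eq_bot_iff.mp h)
  let z : EuclideanSpace ℂ ι := (‖y‖ : ℂ)⁻¹ • y
  refine ⟨WithLp.ofLp z, ?_, fun i => ?_⟩
  · rw [dotProduct_comm]
    exact inner_self_eq_one_of_norm_eq_one (norm_smul_inv_norm hy0)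
  · rw [dotProduct_comm]
    change inner ℂ (WithLp.toLp 2 (g i)) z = 0
    rw [inner_smul_right, (Submodule.mem_orthogonal _ _).mp hy _ (Submodule.subset_span ⟨i, rfl⟩),
      mul_zero]

lemma star_dotProduct_mulVec_star_of_transpose_eq_neg (hskew : Aᵀ = -A) (x y : ι → ℂ) :
    star x ⬝ᵥ (A *ᵥ star y) = -(star y ⬝ᵥ (A *ᵥ star x)) := by
  rw [dotProduct_mulVec, dotProduct_comm, ← mulVec_transpose, hskew, neg_mulVec, dotProduct_neg]

variable [DecidableEq ι]

lemma star_mulVec_star_dotProduct_mulVec_star (hA : A ∈ unitaryGroup ι ℂ) (x y : ι → ℂ) :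
    star (A *ᵥ star x) ⬝ᵥ (A *ᵥ star y) = star y ⬝ᵥ x := by
  rw [star_mulVec, star_star, dotProduct_mulVec, vecMul_vecMul, ← star_eq_conjTranspose, hA.1,
    vecMul_one, dotProduct_comm]

/-- With `θ x = A x̄`, the families `e` and `θ ∘ e` are then jointly orthonormal. -/
lemma exists_orthonormal_isotropic_family (hA : A ∈ unitaryGroup ι ℂ) (hskew : Aᵀ = -A) :
    ∀ k, k + k ≤ Fintype.card ι → ∃ e : Fin k → ι → ℂ,
      (∀ i j, star (e i) ⬝ᵥ e j = if i = j then 1 else 0) ∧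
      ∀ i j, star (e i) ⬝ᵥ (A *ᵥ star (e j)) = 0
  | 0, _ => ⟨Fin.elim0, fun i => i.elim0, fun i => i.elim0⟩
  | k + 1, hk => by
    obtain ⟨e, horth, hiso⟩ := exists_orthonormal_isotropic_family hA hskew k (by omega)
    obtain ⟨x, hx, hxg⟩ := exists_unit_orthogonal_of_lt_card (by omega)
      (Fin.append e fun i => A *ᵥ star (e i))
    have hxe (i : Fin k) : star (e i) ⬝ᵥ x = 0 := by simpa using hxg (Fin.castAdd k i)
    have hxθe (i : Fin k) : star (A *ᵥ star (e i)) ⬝ᵥ x = 0 := by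
      rw [← hxg (Fin.natAdd k i), Fin.append_right]
    refine ⟨Fin.snoc e x, fun i j => ?_, fun i j => ?_⟩ <;>
      induction i using Fin.lastCases <;> induction j using Fin.lastCases
    · simpa using hx
    · rw [Fin.snoc_last, Fin.snoc_castSucc, star_dotProduct, hxe, star_zero,
        if_neg (Fin.castSucc_lt_last _).ne']
    · rw [Fin.snoc_last, Fin.snoc_castSucc, hxe, if_neg (Fin.castSucc_lt_last _).ne]
    · simp [horth, Fin.castSucc_inj]
    · have h := star_dotProduct_mulVec_star_of_transpose_eq_neg hskew x x
      rw [Fin.snoc_last]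
      linear_combination h / 2
    · rw [Fin.snoc_last, Fin.snoc_castSucc, star_dotProduct, hxθe, star_zero]
    · rw [Fin.snoc_last, Fin.snoc_castSucc, star_dotProduct_mulVec_star_of_transpose_eq_neg hskew,
        star_dotProduct, hxθe, star_zero, neg_zero]
    · simpa using hiso _ _

end Quaternionic

lemma mul_map_conj_eq_neg_one_of_transpose_eq_neg {n : Type*} [Fintype n] [DecidableEq n]
    {A : Matrix n n ℂ} (hA : A ∈ unitaryGroup n ℂ) (hskew : Aᵀ = -A) :
    A * A.map (starRingEnd ℂ) = -1 := by
  have h : A.map (starRingEnd ℂ) = -star A := by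
    rw [star_eq_conjTranspose, conjTranspose, hskew]
    ext; simp
  rw [h, mul_neg, ← mem_unitaryGroup_iff.1 hA]

lemma exists_unitary_mul_Jmat_mul_transpose_eq {m : ℕ}
    {A : Matrix (Fin m ⊕ Fin m) (Fin m ⊕ Fin m) ℂ} (hA : A ∈ unitaryGroup (Fin m ⊕ Fin m) ℂ)
    (hskew : Aᵀ = -A) : ∃ v ∈ unitaryGroup (Fin m ⊕ Fin m) ℂ, v * Jmat m * vᵀ = A := by
  obtain ⟨e, horth, hiso⟩ := exists_orthonormal_isotropic_family hA hskew m (by simp)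
  let E : Matrix (Fin m ⊕ Fin m) (Fin m) ℂ := of fun p i => e i p
  let F := A * E.map (starRingEnd ℂ)
  have hEE : Eᴴ * E = 1 := by
    ext i j
    simpa [E, mul_apply, dotProduct, one_apply] using horth i j
  have hEF : Eᴴ * F = 0 := by
    ext i j
    simpa [E, F, mul_apply, dotProduct, mulVec, Finset.mul_sum] using hiso i j
  have hFF : Fᴴ * F = 1 := by
    rw [conjTranspose_mul, Matrix.mul_assoc, ← Matrix.mul_assoc Aᴴ, ← star_eq_conjTranspose, hA.1,
      Matrix.one_mul, ← conjTranspose_map (starRingEnd ℂ) fun _ => rfl, ← Matrix.map_mul, hEE,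
      Matrix.map_one _ (map_zero _) (map_one _)]
  let v := fromCols E F
  have hv : v ∈ unitaryGroup (Fin m ⊕ Fin m) ℂ := by
    rw [mem_unitaryGroup_iff', star_eq_conjTranspose,
      conjTranspose_fromCols_eq_fromRows_conjTranspose, fromRows_mul_fromCols, hEE, hEF, hFF,
      ← conjTranspose_conjTranspose E, ← conjTranspose_mul, hEF, conjTranspose_zero,
      fromBlocks_one]
  have hvJ : v * Jmat m = A * v.map (starRingEnd ℂ) := by
    have hF : A * F.map (starRingEnd ℂ) = -E := by
      rw [Matrix.map_mul, ← Matrix.mul_assoc, mul_map_conj_eq_neg_one_of_transpose_eq_neg hA hskew,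
        Matrix.neg_mul, Matrix.one_mul]
      ext; simp
    rw [Jmat, fromCols_mul_fromBlocks, fromCols_map, mul_fromCols, hF]
    simp [F]
  refine ⟨v, hv, ?_⟩
  rw [hvJ, mul_assoc, map_conj_mul_transpose_of_mem_unitaryGroup hv, mul_one]

lemma Jmat_mul_map_conj_mul_Jmat_inv_eq_self_iff {m : ℕ}
    {g : Matrix (Fin m ⊕ Fin m) (Fin m ⊕ Fin m) ℂ} (hg : g ∈ unitaryGroup (Fin m ⊕ Fin m) ℂ) :
    Jmat m * g.map (starRingEnd ℂ) * (Jmat m)⁻¹ = g ↔ g * Jmat m * gᵀ = Jmat m := by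
  let J : (Matrix (Fin m ⊕ Fin m) (Fin m ⊕ Fin m) ℂ)ˣ :=
    ⟨Jmat m, -Jmat m, by rw [mul_neg, Jmat_mul_Jmat, neg_neg],
      by rw [neg_mul, Jmat_mul_Jmat, neg_neg]⟩
  let gbar : (Matrix (Fin m ⊕ Fin m) (Fin m ⊕ Fin m) ℂ)ˣ :=
    ⟨g.map (starRingEnd ℂ), gᵀ, map_conj_mul_transpose_of_mem_unitaryGroup hg,
      transpose_mul_map_conj_of_mem_unitaryGroup hg⟩
  change J.val * gbar.val * (Jmat m)⁻¹ = g ↔ g * J.val * gbar⁻¹.val = J.val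
  rw [Jmat_inv, show -Jmat m = J⁻¹.val from rfl, Units.mul_inv_eq_iff_eq_mul,
    Units.mul_inv_eq_iff_eq_mul, eq_comm]

lemma exists_unitary_mul_eq_Jmat_mul_map_conj_mul_Jmat_inv {m : ℕ}
    {u : Matrix (Fin m ⊕ Fin m) (Fin m ⊕ Fin m) ℂ} (hu : u ∈ unitaryGroup (Fin m ⊕ Fin m) ℂ)
    (h : u * (Jmat m * u.map (starRingEnd ℂ) * (Jmat m)⁻¹) = 1) :
    ∃ w ∈ unitaryGroup (Fin m ⊕ Fin m) ℂ,
      w * u = Jmat m * w.map (starRingEnd ℂ) * (Jmat m)⁻¹ := by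
  rw [Jmat_inv] at h ⊢
  have hJ : u * Jmat m * u.map (starRingEnd ℂ) = Jmat m := by
    calc u * Jmat m * u.map (starRingEnd ℂ)
        = u * (Jmat m * u.map (starRingEnd ℂ) * -Jmat m) * Jmat m := by
          simp only [mul_assoc, neg_mul, Jmat_mul_Jmat, mul_neg, neg_neg, mul_one]
      _ = Jmat m := by rw [h, one_mul]
  have hskew : (u * Jmat m)ᵀ = -(u * Jmat m) := by
    rw [transpose_mul, Jmat_transpose, neg_mul, neg_inj]
    calc Jmat m * uᵀ = u * Jmat m * u.map (starRingEnd ℂ) * uᵀ := by rw [hJ]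
      _ = u * Jmat m := by
        rw [mul_assoc _ (u.map _), map_conj_mul_transpose_of_mem_unitaryGroup hu, mul_one]
  obtain ⟨v, hv, hvA⟩ :=
    exists_unitary_mul_Jmat_mul_transpose_eq (mul_mem hu Jmat_mem_unitaryGroup) hskew
  have hv' : (star v).map (starRingEnd ℂ) = vᵀ := by ext; simp
  refine ⟨star v, Unitary.star_mem hv, ?_⟩
  calc star v * u = star v * (u * Jmat m) * -Jmat m := by
        simp only [mul_assoc, mul_neg, Jmat_mul_Jmat, neg_neg, mul_one]
    _ = Jmat m * (star v).map (starRingEnd ℂ) * -Jmat m := by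
        rw [← hvA, hv', ← mul_assoc, ← mul_assoc, hv.1, one_mul]

theorem stmt9_general (m : ℕ) {S Γ : Type*} [Group S] [Group Γ]
    (hS : Nat.card S = 2)
    (φΓ : S →* MulAut Γ)
    (φU : S →* MulAut (Matrix.unitaryGroup (Fin m ⊕ Fin m) ℂ))
    (hφU : ∀ s : S, s ≠ 1 → ∀ u : Matrix.unitaryGroup (Fin m ⊕ Fin m) ℂ,
      ((φU s u : Matrix (Fin m ⊕ Fin m) (Fin m ⊕ Fin m) ℂ))
        = Jmat m * (u : Matrix (Fin m ⊕ Fin m) (Fin m ⊕ Fin m) ℂ).map (starRingEnd ℂ)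
            * (Jmat m)⁻¹) :
    ∃ e : Quot (fun ρ₁ ρ₂ : EquivHom φΓ φU =>
            ∃ g : Matrix.unitaryGroup (Fin m ⊕ Fin m) ℂ,
              ((g : Matrix (Fin m ⊕ Fin m) (Fin m ⊕ Fin m) ℂ) * Jmat m
                  * (g : Matrix (Fin m ⊕ Fin m) (Fin m ⊕ Fin m) ℂ).transpose = Jmat m) ∧
              ∀ γ : Γ, ρ₂.1 γ = g * ρ₁.1 γ * g⁻¹)
          ≃ Quot (fun χ₁ χ₂ : AugHom φΓ φU =>
            ∃ u : Matrix.unitaryGroup (Fin m ⊕ Fin m) ℂ, ∀ x : Γ ⋊[φΓ] S,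
              χ₂.1 x = SemidirectProduct.inl u * χ₁.1 x * (SemidirectProduct.inl u)⁻¹),
      ∀ ρ : EquivHom φΓ φU, e (Quot.mk _ ρ) = Quot.mk _ (hatFun φΓ φU ρ) := by
  obtain ⟨s₀, hs₀, -⟩ := (Nat.card_eq_two_iff' (1 : S)).1 hS
  have hfixed (g : unitaryGroup (Fin m ⊕ Fin m) ℂ) :
      (∀ s, φU s g = g) ↔ (g : Matrix _ _ ℂ) * Jmat m * (g : Matrix _ _ ℂ)ᵀ = Jmat m := by
    rw [← Jmat_mul_map_conj_mul_Jmat_inv_eq_self_iff g.2, ← hφU s₀ hs₀, Subtype.coe_inj]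
    refine ⟨fun h => h s₀, fun h s => ?_⟩
    by_cases hs : s = 1
    · simp [hs]
    · rwa [← Subtype.coe_inj, hφU s hs, ← hφU s₀ hs₀, Subtype.coe_inj]
  have hH1 : H1Trivial φU := by
    refine h1Trivial_of_card_eq_two hS fun s hs u hu => ?_
    obtain ⟨w, hw, hwu⟩ := exists_unitary_mul_eq_Jmat_mul_map_conj_mul_Jmat_inv u.2
      (by rw [← hφU s hs]; exact congrArg Subtype.val hu)
    refine ⟨⟨w, hw⟩, eq_inv_mul_of_mul_eq (Subtype.ext ?_)⟩
    rw [hφU s hs]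
    exact hwu
  obtain ⟨e, he⟩ := exists_quotEquiv_hatFun (φΓ := φΓ) hH1
  exact ⟨(Quot.congrRight fun _ _ => exists_congr fun g =>
    and_congr_left' (hfixed g).symm).trans e, he⟩

/-- Let `Σ` be a group of order two acting on a group `Γ`, and acting on `U(2m)` by
`σ_H(u) = J·ū·J⁻¹` (with fixed subgroup the compact symplectic group
`Sp(m) = {u ∈ U(2m) : u·J·uᵀ = J}`). Then `ρ ↦ ρ̂` induces a bijection from Σ-equivariant
homomorphisms `Γ → U(2m)` modulo conjugation by elements of `Sp(m)` onto homomorphisms of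
Σ-augmentations `Γ⋊Σ → U(2m)⋊Σ` modulo conjugation by elements `(u, 1)` with `u ∈ U(2m)`. -/
theorem stmt9 (m : ℕ) (hm : 1 ≤ m) {S Γ : Type*} [Group S] [Group Γ]
    (hS : Nat.card S = 2)
    (φΓ : S →* MulAut Γ)
    (φU : S →* MulAut (Matrix.unitaryGroup (Fin m ⊕ Fin m) ℂ))
    (hφU : ∀ s : S, s ≠ 1 → ∀ u : Matrix.unitaryGroup (Fin m ⊕ Fin m) ℂ,
      ((φU s u : Matrix (Fin m ⊕ Fin m) (Fin m ⊕ Fin m) ℂ))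
        = Jmat m * (u : Matrix (Fin m ⊕ Fin m) (Fin m ⊕ Fin m) ℂ).map (starRingEnd ℂ)
            * (Jmat m)⁻¹) :
    ∃ e : Quot (fun ρ₁ ρ₂ : EquivHom φΓ φU =>
            ∃ g : Matrix.unitaryGroup (Fin m ⊕ Fin m) ℂ,
              ((g : Matrix (Fin m ⊕ Fin m) (Fin m ⊕ Fin m) ℂ) * Jmat m
                  * (g : Matrix (Fin m ⊕ Fin m) (Fin m ⊕ Fin m) ℂ).transpose = Jmat m) ∧
              ∀ γ : Γ, ρ₂.1 γ = g * ρ₁.1 γ * g⁻¹)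
          ≃ Quot (fun χ₁ χ₂ : AugHom φΓ φU =>
            ∃ u : Matrix.unitaryGroup (Fin m ⊕ Fin m) ℂ, ∀ x : Γ ⋊[φΓ] S,
              χ₂.1 x = SemidirectProduct.inl u * χ₁.1 x * (SemidirectProduct.inl u)⁻¹),
      ∀ ρ : EquivHom φΓ φU, e (Quot.mk _ ρ) = Quot.mk _ (hatFun φΓ φU ρ) :=
  stmt9_general m hS φΓ φU hφU
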